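/- arXiv:1610.05879 — 4 statements merged into one kernel-verified Lean document; each statement's English description precedes it below -/
import Mathlib

section
/- For all x̂ ∈ 𝕊¹ one has |w_ℓ(x̂)| = |w(x̂)| if and only if for all x̂ ∈ 𝕊¹ one has Re(e^{ik⟨ℓ, d₁ - d₂⟩} · v₁(x̂) · conj(v₂(x̂))) = Re(v₁(x̂) · conj(v₂(x̂))). (This is the key equivalence (2.4) in the proof of Theorem 2.2.) -/
open Complex ComplexConjugate RealInnerProductSpace

/-! The common phase `e^{ik⟨ℓ, d₂ - x̂⟩}` has modulus one, so it can be factored out of `w_ℓ`,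
leaving `‖u v₁ + v₂‖` with `u = e^{ik⟨ℓ, d₁ - d₂⟩}`. Expanding `‖u a + b‖² = ‖a‖² + ‖b‖² + 2 Re(u a b̄)`
and `‖a + b‖² = ‖a‖² + ‖b‖² + 2 Re(a b̄)` shows that the two norms agree exactly when the cross
terms do. -/

lemma norm_mul_add_eq_norm_add_iff {u : ℂ} (hu : ‖u‖ = 1) (a b : ℂ) :
    ‖u * a + b‖ = ‖a + b‖ ↔ (u * (a * conj b)).re = (a * conj b).re := by
  have hu' : normSq u = 1 := by rw [normSq_eq_norm_sq, hu, one_pow]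
  rw [norm_def, norm_def, Real.sqrt_inj (normSq_nonneg _) (normSq_nonneg _), normSq_add,
    normSq_add, normSq_mul, hu', one_mul, mul_assoc]
  constructor <;> intro h <;> linarith

lemma norm_exp_mul_add_exp_mul (α β : ℝ) (a b : ℂ) :
    ‖exp (I * α) * a + exp (I * β) * b‖ = ‖exp (I * ↑(α - β)) * a + b‖ := by
  have hsplit : exp (I * α) = exp (I * β) * exp (I * ↑(α - β)) := by
    rw [← exp_add]; push_cast; ring_nf
  rw [hsplit, mul_assoc, ← mul_add, norm_mul, norm_exp_I_mul_ofReal, one_mul]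

theorem stmt_0_general
    (k : ℝ)
    (d₁ d₂ ℓ : EuclideanSpace ℝ (Fin 2))
    (v₁ v₂ : EuclideanSpace ℝ (Fin 2) → ℂ) :
    (∀ x : EuclideanSpace ℝ (Fin 2), ‖x‖ = 1 →
        ‖Complex.exp (Complex.I * (k * ⟪ℓ, d₁ - x⟫)) * v₁ x
            + Complex.exp (Complex.I * (k * ⟪ℓ, d₂ - x⟫)) * v₂ x‖
          = ‖v₁ x + v₂ x‖) ↔
    (∀ x : EuclideanSpace ℝ (Fin 2), ‖x‖ = 1 →
        (Complex.exp (Complex.I * (k * ⟪ℓ, d₁ - d₂⟫))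
            * (v₁ x * (starRingEnd ℂ) (v₂ x))).re
          = (v₁ x * (starRingEnd ℂ) (v₂ x)).re) := by
  refine forall₂_congr fun x _ => ?_
  have hphase : k * ⟪ℓ, d₁ - x⟫ - k * ⟪ℓ, d₂ - x⟫ = k * ⟪ℓ, d₁ - d₂⟫ := by
    rw [← mul_sub, ← inner_sub_right, sub_sub_sub_cancel_right]
  simp only [← ofReal_mul]
  rw [norm_exp_mul_add_exp_mul, hphase]
  exact norm_mul_add_eq_norm_add_iff (norm_exp_I_mul_ofReal _) _ _

/-- The key equivalence (2.4) in the proof of Theorem 2.2: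
`|w_ℓ(x̂)| = |w(x̂)|` for all `x̂ ∈ 𝕊¹` iff
`Re(e^{ik⟨ℓ,d₁-d₂⟩} v₁(x̂) conj(v₂(x̂))) = Re(v₁(x̂) conj(v₂(x̂)))` for all `x̂ ∈ 𝕊¹`. -/
theorem stmt_0
    (k : ℝ) (hk : 0 < k)
    (d₁ d₂ ℓ : EuclideanSpace ℝ (Fin 2))
    (hd₁ : ‖d₁‖ = 1) (hd₂ : ‖d₂‖ = 1) (hne : d₁ ≠ d₂)
    (v₁ v₂ : EuclideanSpace ℝ (Fin 2) → ℂ) :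
    (∀ x : EuclideanSpace ℝ (Fin 2), ‖x‖ = 1 →
        ‖Complex.exp (Complex.I * (k * ⟪ℓ, d₁ - x⟫)) * v₁ x
            + Complex.exp (Complex.I * (k * ⟪ℓ, d₂ - x⟫)) * v₂ x‖
          = ‖v₁ x + v₂ x‖) ↔
    (∀ x : EuclideanSpace ℝ (Fin 2), ‖x‖ = 1 →
        (Complex.exp (Complex.I * (k * ⟪ℓ, d₁ - d₂⟫))
            * (v₁ x * (starRingEnd ℂ) (v₂ x))).re
          = (v₁ x * (starRingEnd ℂ) (v₂ x)).re) :=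
  stmt_0_general k d₁ d₂ ℓ v₁ v₂
end

section
/- If k⟨ℓ, d₁ - d₂⟩ = 2πn for some integer n, then |w_ℓ(x̂)| = |w(x̂)| for all x̂ ∈ 𝕊¹. (Sufficiency part of Theorem 2.2: the phaseless far-field pattern is invariant under such translations ℓ.) -/
open Complex RealInnerProductSpace

/-! Since `⟪ℓ, d₁ - x⟫ - ⟪ℓ, d₂ - x⟫ = ⟪ℓ, d₁ - d₂⟫` does not depend on `x`, the hypothesis makes
the two phase factors of `w_ℓ` equal, so `w_ℓ(x) = e^{ik⟪ℓ, d₁ - x⟫} w(x)` with a unimodular factor. -/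

theorem Complex.exp_I_mul_eq_of_sub_eq_two_pi_mul_int {a b : ℝ} {n : ℤ}
    (h : a - b = 2 * Real.pi * n) : exp (I * a) = exp (I * b) := by
  rw [show a = b + 2 * Real.pi * n by linarith]
  push_cast
  rw [mul_add, exp_add, show I * (2 * Real.pi * n) = n * (2 * Real.pi * I) by ring,
    exp_int_mul_two_pi_mul_I, mul_one]

theorem inner_sub_sub_inner_sub_right {E : Type*} [NormedAddCommGroup E] [InnerProductSpace ℝ E]
    (ℓ d₁ d₂ x : E) : ⟪ℓ, d₁ - x⟫ - ⟪ℓ, d₂ - x⟫ = ⟪ℓ, d₁ - d₂⟫ := by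
  rw [← inner_sub_right, sub_sub_sub_cancel_right]

theorem stmt_1_general
    (k : ℝ)
    (d₁ d₂ ℓ : EuclideanSpace ℝ (Fin 2))
    (v₁ v₂ : EuclideanSpace ℝ (Fin 2) → ℂ)
    (hℓ : ∃ n : ℤ, k * ⟪ℓ, d₁ - d₂⟫ = 2 * Real.pi * n) :
    ∀ x : EuclideanSpace ℝ (Fin 2), ‖x‖ = 1 →
      ‖Complex.exp (Complex.I * (k * ⟪ℓ, d₁ - x⟫)) * v₁ x
          + Complex.exp (Complex.I * (k * ⟪ℓ, d₂ - x⟫)) * v₂ x‖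
        = ‖v₁ x + v₂ x‖ := by
  obtain ⟨n, hn⟩ := hℓ
  intro x _
  have hphase : exp (I * (k * ⟪ℓ, d₁ - x⟫)) = exp (I * (k * ⟪ℓ, d₂ - x⟫)) := by
    exact_mod_cast exp_I_mul_eq_of_sub_eq_two_pi_mul_int (n := n)
      (by rw [← mul_sub, inner_sub_sub_inner_sub_right, hn])
  rw [hphase, ← mul_add, norm_mul, ← ofReal_mul, norm_exp_I_mul_ofReal, one_mul]

/-- Sufficiency part of Theorem 2.2: if `k⟨ℓ, d₁ - d₂⟩ = 2πn` for some
integer `n`, then `|w_ℓ(x̂)| = |w(x̂)|` for all `x̂ ∈ 𝕊¹`. -/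
theorem stmt_1
    (k : ℝ) (hk : 0 < k)
    (d₁ d₂ ℓ : EuclideanSpace ℝ (Fin 2))
    (hd₁ : ‖d₁‖ = 1) (hd₂ : ‖d₂‖ = 1) (hne : d₁ ≠ d₂)
    (v₁ v₂ : EuclideanSpace ℝ (Fin 2) → ℂ)
    (hℓ : ∃ n : ℤ, k * ⟪ℓ, d₁ - d₂⟫ = 2 * Real.pi * n) :
    ∀ x : EuclideanSpace ℝ (Fin 2), ‖x‖ = 1 →
      ‖Complex.exp (Complex.I * (k * ⟪ℓ, d₁ - x⟫)) * v₁ x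
          + Complex.exp (Complex.I * (k * ⟪ℓ, d₂ - x⟫)) * v₂ x‖
        = ‖v₁ x + v₂ x‖ :=
  stmt_1_general k d₁ d₂ ℓ v₁ v₂ hℓ
end

section
/- Suppose there is a point x̂₀ ∈ 𝕊¹ with v₁(x̂₀)·conj(v₂(x̂₀)) ≠ 0, and let θ₀ be the argument of the complex number v₁(x̂₀)·conj(v₂(x̂₀)). If |w_ℓ(x̂)| = |w(x̂)| for all x̂ ∈ 𝕊¹, then there exists an integer n such that k⟨ℓ, d₁ - d₂⟩ = 2πn or k⟨ℓ, d₁ - d₂⟩ = 2πn - 2θ₀. (Necessity part of Theorem 2.2: apart from the lattice of lines ℓ_n, at most one further family ℓ_{nτ} with τ ∈ (0, 2π) can leave the phaseless far-field pattern invariant.) -/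
open Complex RealInnerProductSpace ComplexConjugate

/-! Only the phase difference `β = k⟨ℓ, d₁ - d₂⟩` between the two incident waves survives in the
modulus of `w_ℓ(x̂₀)`. Expanding `|e^{iβ} v₁ + v₂|² = |v₁ + v₂|²` leaves
`Re (e^{iβ} v₁ conj v₂) = Re (v₁ conj v₂)`, i.e. `cos (β + θ₀) = cos θ₀`, whence
`β ≡ 0` or `β ≡ -2θ₀` modulo `2π`. -/

theorem Complex.norm_exp_mul_I_mul_add_exp_mul_I_mul (s t : ℝ) (a b : ℂ) :
    ‖exp (s * I) * a + exp (t * I) * b‖ = ‖exp ((s - t : ℝ) * I) * a + b‖ := by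
  have hfactor : exp (s * I) * a + exp (t * I) * b
      = exp (t * I) * (exp ((s - t : ℝ) * I) * a + b) := by
    rw [mul_add, ← mul_assoc, ← exp_add]
    push_cast
    ring_nf
  rw [hfactor, norm_mul, norm_exp_ofReal_mul_I, one_mul]

theorem Complex.re_exp_mul_I_mul_mul_conj_eq {a b : ℂ} {β : ℝ}
    (h : ‖exp (β * I) * a + b‖ = ‖a + b‖) :
    (exp (β * I) * (a * conj b)).re = (a * conj b).re := by
  have hsq : normSq (exp (β * I) * a + b) = normSq (a + b) := by
    rw [← Complex.sq_norm, ← Complex.sq_norm, h]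
  have hunit : normSq (exp (β * I)) = 1 := by
    rw [← Complex.sq_norm, norm_exp_ofReal_mul_I, one_pow]
  rw [normSq_add, normSq_add, normSq_mul, hunit, one_mul, mul_assoc] at hsq
  linarith

theorem Complex.re_exp_mul_I_mul (β : ℝ) (z : ℂ) :
    (exp (β * I) * z).re = ‖z‖ * Real.cos (β + arg z) := by
  conv_lhs => rw [← norm_mul_exp_arg_mul_I z]
  rw [mul_left_comm, ← exp_add, ← add_mul, ← ofReal_add, re_ofReal_mul, exp_ofReal_mul_I_re]

theorem Real.exists_int_of_cos_add_eq_cos {β θ : ℝ} (h : Real.cos (β + θ) = Real.cos θ) :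
    ∃ n : ℤ, β = 2 * Real.pi * n ∨ β = 2 * Real.pi * n - 2 * θ := by
  obtain ⟨n, hn | hn⟩ := Real.cos_eq_cos_iff.mp h
  · exact ⟨-n, Or.inl (by push_cast; linarith)⟩
  · exact ⟨n, Or.inr (by linarith)⟩

theorem stmt_3_general
    (k : ℝ)
    (d₁ d₂ ℓ : EuclideanSpace ℝ (Fin 2))
    (v₁ v₂ : EuclideanSpace ℝ (Fin 2) → ℂ)
    (x₀ : EuclideanSpace ℝ (Fin 2)) (hx₀ : ‖x₀‖ = 1)
    (hv : v₁ x₀ * (starRingEnd ℂ) (v₂ x₀) ≠ 0)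
    (θ₀ : ℝ) (hθ₀ : θ₀ = Complex.arg (v₁ x₀ * (starRingEnd ℂ) (v₂ x₀)))
    (hinv : ∀ x : EuclideanSpace ℝ (Fin 2), ‖x‖ = 1 →
      ‖Complex.exp (Complex.I * (k * ⟪ℓ, d₁ - x⟫)) * v₁ x
          + Complex.exp (Complex.I * (k * ⟪ℓ, d₂ - x⟫)) * v₂ x‖
        = ‖v₁ x + v₂ x‖) :
    ∃ n : ℤ, k * ⟪ℓ, d₁ - d₂⟫ = 2 * Real.pi * n
      ∨ k * ⟪ℓ, d₁ - d₂⟫ = 2 * Real.pi * n - 2 * θ₀ := by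
  have hphase : k * ⟪ℓ, d₁ - x₀⟫ - k * ⟪ℓ, d₂ - x₀⟫ = k * ⟪ℓ, d₁ - d₂⟫ := by
    rw [← mul_sub, ← inner_sub_right, sub_sub_sub_cancel_right]
  have hnorm := hinv x₀ hx₀
  simp only [mul_comm I, ← ofReal_mul] at hnorm
  rw [norm_exp_mul_I_mul_add_exp_mul_I_mul, hphase] at hnorm
  have hre := re_exp_mul_I_mul_mul_conj_eq hnorm
  rw [re_exp_mul_I_mul, ← norm_mul_cos_arg] at hre
  have hcos := mul_left_cancel₀ (norm_ne_zero_iff.mpr hv) hre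
  exact hθ₀ ▸ Real.exists_int_of_cos_add_eq_cos hcos

/-- Necessity part of Theorem 2.2: if `v₁(x̂₀) conj(v₂(x̂₀)) ≠ 0` for some
`x̂₀ ∈ 𝕊¹` with argument `θ₀`, and `|w_ℓ(x̂)| = |w(x̂)|` for all `x̂ ∈ 𝕊¹`, then there is an
integer `n` with `k⟨ℓ, d₁-d₂⟩ = 2πn` or `k⟨ℓ, d₁-d₂⟩ = 2πn - 2θ₀`. -/
theorem stmt_3
    (k : ℝ) (hk : 0 < k)
    (d₁ d₂ ℓ : EuclideanSpace ℝ (Fin 2))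
    (hd₁ : ‖d₁‖ = 1) (hd₂ : ‖d₂‖ = 1) (hne : d₁ ≠ d₂)
    (v₁ v₂ : EuclideanSpace ℝ (Fin 2) → ℂ)
    (x₀ : EuclideanSpace ℝ (Fin 2)) (hx₀ : ‖x₀‖ = 1)
    (hv : v₁ x₀ * (starRingEnd ℂ) (v₂ x₀) ≠ 0)
    (θ₀ : ℝ) (hθ₀ : θ₀ = Complex.arg (v₁ x₀ * (starRingEnd ℂ) (v₂ x₀)))
    (hinv : ∀ x : EuclideanSpace ℝ (Fin 2), ‖x‖ = 1 →
      ‖Complex.exp (Complex.I * (k * ⟪ℓ, d₁ - x⟫)) * v₁ x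
          + Complex.exp (Complex.I * (k * ⟪ℓ, d₂ - x⟫)) * v₂ x‖
        = ‖v₁ x + v₂ x‖) :
    ∃ n : ℤ, k * ⟪ℓ, d₁ - d₂⟫ = 2 * Real.pi * n
      ∨ k * ⟪ℓ, d₁ - d₂⟫ = 2 * Real.pi * n - 2 * θ₀ :=
  stmt_3_general k d₁ d₂ ℓ v₁ v₂ x₀ hx₀ hv θ₀ hθ₀ hinv
end

section
/- If |w_ℓ(x̂)| = |w(x̂)| for all x̂ ∈ 𝕊¹ and e^{ik⟨ℓ, d₁ - d₂⟩} ≠ 1, then for every x̂ ∈ 𝕊¹ one has e^{ik⟨ℓ, d₁ - d₂⟩} · v₁(x̂) · conj(v₂(x̂)) = conj(v₁(x̂) · conj(v₂(x̂))). In particular the phase of v₁·conj(v₂) is the same constant at every point where it does not vanish. (This is the observation of Remark 2.1.) -/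
open Complex RealInnerProductSpace
open ComplexConjugate

/-!
The two phase factors lie on the unit circle, so expanding `|w_ℓ|² = |w|²` leaves only the cross
terms: `Re (E z) = Re z` for `z = v₁ conj v₂` and `E = e^{ik⟨ℓ, d₁ - d₂⟩}`. Since `conj E = E⁻¹`,
this reads `E z + E⁻¹ conj z = z + conj z`, i.e. `(E - 1) (E z - conj z) = 0`, and `E ≠ 1`.
-/

namespace Complex

theorem exp_I_mul_ofReal_mul_conj (α β : ℝ) :
    exp (I * α) * conj (exp (I * β)) = exp (I * ↑(α - β)) := by
  rw [← inv_eq_conj (norm_exp_I_mul_ofReal β), ← exp_neg, ← exp_add]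
  push_cast
  ring_nf

theorem re_mul_conj_eq_of_norm_add_eq {a b u v : ℂ} (ha : ‖a‖ = 1) (hb : ‖b‖ = 1)
    (h : ‖a * u + b * v‖ = ‖u + v‖) :
    (a * conj b * (u * conj v)).re = (u * conj v).re := by
  have hsq : normSq (a * u + b * v) = normSq (u + v) := by
    rw [← Complex.sq_norm, ← Complex.sq_norm, h]
  have ha' : normSq a = 1 := by rw [← Complex.sq_norm, ha, one_pow]
  have hb' : normSq b = 1 := by rw [← Complex.sq_norm, hb, one_pow]
  rw [normSq_add, normSq_add, normSq_mul, normSq_mul, ha', hb', map_mul] at hsq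
  have : a * u * (conj b * conj v) = a * conj b * (u * conj v) := by ring
  rw [this] at hsq
  linarith

theorem mul_eq_conj_of_re_mul_eq {E z : ℂ} (hE : ‖E‖ = 1) (hE1 : E ≠ 1)
    (h : (E * z).re = z.re) : E * z = conj z := by
  have hE0 : E ≠ 0 := norm_ne_zero_iff.mp (by rw [hE]; exact one_ne_zero)
  have hsum : E * z + E⁻¹ * conj z = z + conj z := by
    rw [inv_eq_conj hE, ← map_mul, add_conj, add_conj, h]
  have key : (E - 1) * (E * z - conj z) = 0 := by
    field_simp at hsum
    linear_combination hsum
  exact sub_eq_zero.mp ((mul_eq_zero.mp key).resolve_left (sub_ne_zero.mpr hE1))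

end Complex

theorem stmt_4_general
    (k : ℝ)
    (d₁ d₂ ℓ : EuclideanSpace ℝ (Fin 2))
    (v₁ v₂ : EuclideanSpace ℝ (Fin 2) → ℂ)
    (hinv : ∀ x : EuclideanSpace ℝ (Fin 2), ‖x‖ = 1 →
      ‖Complex.exp (Complex.I * (k * ⟪ℓ, d₁ - x⟫)) * v₁ x
          + Complex.exp (Complex.I * (k * ⟪ℓ, d₂ - x⟫)) * v₂ x‖
        = ‖v₁ x + v₂ x‖)
    (hexp : Complex.exp (Complex.I * (k * ⟪ℓ, d₁ - d₂⟫)) ≠ 1) :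
    ∀ x : EuclideanSpace ℝ (Fin 2), ‖x‖ = 1 →
      Complex.exp (Complex.I * (k * ⟪ℓ, d₁ - d₂⟫)) * (v₁ x * (starRingEnd ℂ) (v₂ x))
        = (starRingEnd ℂ) (v₁ x * (starRingEnd ℂ) (v₂ x)) := by
  intro x hx
  have hphase : exp (I * (k * ⟪ℓ, d₁ - x⟫)) * conj (exp (I * (k * ⟪ℓ, d₂ - x⟫)))
      = exp (I * (k * ⟪ℓ, d₁ - d₂⟫)) := by
    have h := exp_I_mul_ofReal_mul_conj (k * ⟪ℓ, d₁ - x⟫) (k * ⟪ℓ, d₂ - x⟫)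
    rw [← mul_sub, ← inner_sub_right, sub_sub_sub_cancel_right] at h
    exact_mod_cast h
  have hre := re_mul_conj_eq_of_norm_add_eq (mod_cast norm_exp_I_mul_ofReal _)
    (mod_cast norm_exp_I_mul_ofReal _) (hinv x hx)
  rw [hphase] at hre
  exact mul_eq_conj_of_re_mul_eq (mod_cast norm_exp_I_mul_ofReal _) hexp hre

/-- Remark 2.1: if `|w_ℓ(x̂)| = |w(x̂)|` for all `x̂ ∈ 𝕊¹` and
`e^{ik⟨ℓ, d₁-d₂⟩} ≠ 1`, then `e^{ik⟨ℓ, d₁-d₂⟩} v₁(x̂) conj(v₂(x̂)) = conj(v₁(x̂) conj(v₂(x̂)))`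
for every `x̂ ∈ 𝕊¹`. -/
theorem stmt_4
    (k : ℝ) (hk : 0 < k)
    (d₁ d₂ ℓ : EuclideanSpace ℝ (Fin 2))
    (hd₁ : ‖d₁‖ = 1) (hd₂ : ‖d₂‖ = 1) (hne : d₁ ≠ d₂)
    (v₁ v₂ : EuclideanSpace ℝ (Fin 2) → ℂ)
    (hinv : ∀ x : EuclideanSpace ℝ (Fin 2), ‖x‖ = 1 →
      ‖Complex.exp (Complex.I * (k * ⟪ℓ, d₁ - x⟫)) * v₁ x
          + Complex.exp (Complex.I * (k * ⟪ℓ, d₂ - x⟫)) * v₂ x‖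
        = ‖v₁ x + v₂ x‖)
    (hexp : Complex.exp (Complex.I * (k * ⟪ℓ, d₁ - d₂⟫)) ≠ 1) :
    ∀ x : EuclideanSpace ℝ (Fin 2), ‖x‖ = 1 →
      Complex.exp (Complex.I * (k * ⟪ℓ, d₁ - d₂⟫)) * (v₁ x * (starRingEnd ℂ) (v₂ x))
        = (starRingEnd ℂ) (v₁ x * (starRingEnd ℂ) (v₂ x)) :=
  stmt_4_general k d₁ d₂ ℓ v₁ v₂ hinv hexp
end
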